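/- For the path P_n on n ≥ 4 vertices, J(P_n) = (1+x) J(P_{n−1}) + x(y−1)( J(P_{n−2}) + y J(P_{n−3}) ). -/

import Mathlib

open Finset
open scoped Classical

/-- External neighbourhood N(W) = N[W] \ W of a vertex subset. -/
noncomputable def extN {V : Type} [Fintype V] (G : SimpleGraph V) (W : Finset V) : Finset V :=
  Finset.univ.filter (fun v => v ∉ W ∧ ∃ w ∈ W, G.Adj v w)

/-- The bivariate domination polynomial J(G;x,y) = ∑_{W ⊆ V} x^|W| y^|N(W)|. -/
noncomputable def JP {V : Type} [Fintype V] (G : SimpleGraph V) (x y : ℝ) : ℝ :=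
  ∑ W : Finset V, x ^ W.card * y ^ (extN G W).card

/-- Vertex deletion G − a. -/
noncomputable def Gdel {V : Type} (G : SimpleGraph V) (a : V) : SimpleGraph {v : V // v ≠ a} :=
  G.induce {v : V | v ≠ a}

/-- Deletion of a set of vertices. -/
noncomputable def GdelSet {V : Type} (G : SimpleGraph V) (S : Set V) : SimpleGraph {v : V // v ∉ S} :=
  G.induce {v : V | v ∉ S}

/-- Vertex contraction G∖a: join all neighbours of a, then delete a. -/
noncomputable def Gcon {V : Type} (G : SimpleGraph V) (a : V) : SimpleGraph {v : V // v ≠ a} where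
  Adj u v := u ≠ v ∧ (G.Adj u.val v.val ∨ (G.Adj u.val a ∧ G.Adj a v.val))
  symm := ⟨fun _ _ ⟨h1, h2⟩ =>
    ⟨fun e => h1 e.symm, h2.imp G.adj_symm (fun ⟨p, q⟩ => ⟨G.adj_symm q, G.adj_symm p⟩)⟩⟩
  loopless := ⟨fun _ h => h.1 rfl⟩

/-!
Sort the subsets `W` of the path by the state of its last vertex `v`: `v ∈ W`, `v ∉ W`, or `v`
neither in `W` nor dominated by it. Appending a vertex changes the three partial sums of
`x ^ |W| * y ^ |N(W)|` linearly: a new vertex left out of `W` is dominated exactly when `v ∈ W`,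
and putting the new vertex into `W` adds `v` to `N(W)` exactly when `v` was undominated.
Eliminating the partial sums from these transitions leaves the three-term recurrence for `J(P_n)`.
-/

theorem Finset.powerset_map {α β : Type*} (f : α ↪ β) (s : Finset α) :
    (s.map f).powerset = s.powerset.map (Finset.mapEmbedding f).toEmbedding := by
  ext t
  simp [Finset.subset_map_iff, eq_comm]

namespace Fin

variable {M : Type*} [AddCommMonoid M] {n : ℕ}

theorem sum_finset_castSucc (f : Finset (Fin (n + 1)) → M) :
    ∑ W, f W = ∑ W : Finset (Fin n), f (W.map castSuccEmb)
      + ∑ W : Finset (Fin n), f (insert (last n) (W.map castSuccEmb)) := by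
  rw [← Finset.powerset_univ, univ_castSuccEmb, Finset.cons_eq_insert,
    Finset.sum_powerset_insert (by simp), Finset.powerset_map, Finset.sum_map, Finset.sum_map]
  simp

theorem sum_filter_last_notMem (f : Finset (Fin (n + 1)) → M) :
    ∑ W with last n ∉ W, f W = ∑ W : Finset (Fin n), f (W.map castSuccEmb) := by
  simp [Finset.sum_filter, sum_finset_castSucc]

theorem sum_filter_last_mem (f : Finset (Fin (n + 1)) → M) :
    ∑ W with last n ∈ W, f W
      = ∑ W : Finset (Fin n), f (insert (last n) (W.map castSuccEmb)) := by
  simp [Finset.sum_filter, sum_finset_castSucc]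

end Fin

namespace SimpleGraph

variable {k : ℕ}

theorem pathGraph_adj_castSucc {a b : Fin (k + 1)} :
    (pathGraph (k + 2)).Adj a.castSucc b.castSucc ↔ (pathGraph (k + 1)).Adj a b := by
  simp [pathGraph_adj]

theorem pathGraph_adj_last_castSucc {a : Fin (k + 1)} :
    (pathGraph (k + 2)).Adj (Fin.last (k + 1)) a.castSucc ↔ a = Fin.last k := by
  simp [pathGraph_adj, Fin.ext_iff]
  omega

theorem pathGraph_adj_castSucc_last {a : Fin (k + 1)} :
    (pathGraph (k + 2)).Adj a.castSucc (Fin.last (k + 1)) ↔ a = Fin.last k := by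
  rw [adj_comm, pathGraph_adj_last_castSucc]

end SimpleGraph

open SimpleGraph

section ExternalNeighbourhood

variable {V : Type} [Fintype V]

theorem mem_extN {G : SimpleGraph V} {W : Finset V} {v : V} :
    v ∈ extN G W ↔ v ∉ W ∧ ∃ w ∈ W, G.Adj v w := by
  simp [extN]

noncomputable def domWeight (G : SimpleGraph V) (x y : ℝ) (W : Finset V) : ℝ :=
  x ^ W.card * y ^ (extN G W).card

theorem JP_eq_sum_domWeight (G : SimpleGraph V) (x y : ℝ) :
    JP G x y = ∑ W, domWeight G x y W := rfl

variable [DecidableEq V]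

noncomputable def JPMem (G : SimpleGraph V) (v : V) (x y : ℝ) : ℝ :=
  ∑ W with v ∈ W, domWeight G x y W

noncomputable def JPNotMem (G : SimpleGraph V) (v : V) (x y : ℝ) : ℝ :=
  ∑ W with v ∉ W, domWeight G x y W

noncomputable def JPUndominated (G : SimpleGraph V) (v : V) (x y : ℝ) : ℝ :=
  ∑ W with v ∉ W ∧ v ∉ extN G W, domWeight G x y W

theorem JPMem_add_JPNotMem (G : SimpleGraph V) (v : V) (x y : ℝ) :
    JPMem G v x y + JPNotMem G v x y = JP G x y :=
  Finset.sum_filter_add_sum_filter_not _ _ _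

end ExternalNeighbourhood

section PathGraph

variable {k : ℕ}

theorem extN_pathGraph_map_castSucc (W : Finset (Fin (k + 1))) :
    extN (pathGraph (k + 2)) (W.map Fin.castSuccEmb)
      = if Fin.last k ∈ W then
          insert (Fin.last (k + 1)) ((extN (pathGraph (k + 1)) W).map Fin.castSuccEmb)
        else (extN (pathGraph (k + 1)) W).map Fin.castSuccEmb := by
  ext v
  induction v using Fin.lastCases with
  | last => split_ifs with h <;> simp [mem_extN, pathGraph_adj_last_castSucc, h]
  | cast v =>
    split_ifs <;> simp [mem_extN, pathGraph_adj_castSucc, Fin.castSucc_ne_last]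

theorem last_mem_extN_pathGraph_map_castSucc (W : Finset (Fin (k + 1))) :
    Fin.last (k + 1) ∈ extN (pathGraph (k + 2)) (W.map Fin.castSuccEmb) ↔ Fin.last k ∈ W := by
  simp [mem_extN, pathGraph_adj_last_castSucc]

theorem extN_pathGraph_insert_last (W : Finset (Fin (k + 1))) :
    extN (pathGraph (k + 2)) (insert (Fin.last (k + 1)) (W.map Fin.castSuccEmb))
      = (if Fin.last k ∈ W then extN (pathGraph (k + 1)) W
          else insert (Fin.last k) (extN (pathGraph (k + 1)) W)).map Fin.castSuccEmb := by
  ext v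
  induction v using Fin.lastCases with
  | last => simp [mem_extN]
  | cast v =>
    split_ifs <;>
      simp [mem_extN, pathGraph_adj_castSucc, pathGraph_adj_castSucc_last, Fin.castSucc_ne_last] <;>
      grind

theorem domWeight_pathGraph_map_castSucc (x y : ℝ) (W : Finset (Fin (k + 1))) :
    domWeight (pathGraph (k + 2)) x y (W.map Fin.castSuccEmb)
      = if Fin.last k ∈ W then y * domWeight (pathGraph (k + 1)) x y W
        else domWeight (pathGraph (k + 1)) x y W := by
  rw [domWeight, domWeight, extN_pathGraph_map_castSucc]
  split_ifs <;> simp [Finset.card_insert_of_notMem, pow_succ]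
  ring

theorem domWeight_pathGraph_insert_last (x y : ℝ) (W : Finset (Fin (k + 1))) :
    domWeight (pathGraph (k + 2)) x y (insert (Fin.last (k + 1)) (W.map Fin.castSuccEmb))
      = x * if Fin.last k ∉ W ∧ Fin.last k ∉ extN (pathGraph (k + 1)) W then
          y * domWeight (pathGraph (k + 1)) x y W
        else domWeight (pathGraph (k + 1)) x y W := by
  rw [domWeight, domWeight, extN_pathGraph_insert_last]
  split_ifs <;> simp_all [Finset.card_insert_of_notMem, pow_succ]
  all_goals ring

variable (k) (x y : ℝ)

theorem JPNotMem_pathGraph_succ :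
    JPNotMem (pathGraph (k + 2)) (Fin.last (k + 1)) x y
      = y * JPMem (pathGraph (k + 1)) (Fin.last k) x y
        + JPNotMem (pathGraph (k + 1)) (Fin.last k) x y := by
  rw [JPNotMem, Fin.sum_filter_last_notMem]
  simp_rw [domWeight_pathGraph_map_castSucc]
  rw [Finset.sum_ite, ← Finset.mul_sum, JPMem, JPNotMem]

theorem JPUndominated_pathGraph_succ :
    JPUndominated (pathGraph (k + 2)) (Fin.last (k + 1)) x y
      = JPNotMem (pathGraph (k + 1)) (Fin.last k) x y := by
  rw [JPUndominated, ← Finset.filter_filter, Finset.sum_filter, Fin.sum_filter_last_notMem,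
    JPNotMem, Finset.sum_filter]
  simp +contextual [domWeight_pathGraph_map_castSucc, last_mem_extN_pathGraph_map_castSucc]

theorem JPMem_pathGraph_succ :
    JPMem (pathGraph (k + 2)) (Fin.last (k + 1)) x y
      = x * (JP (pathGraph (k + 1)) x y
          + (y - 1) * JPUndominated (pathGraph (k + 1)) (Fin.last k) x y) := by
  rw [JPMem, Fin.sum_filter_last_mem]
  simp_rw [domWeight_pathGraph_insert_last]
  rw [← Finset.mul_sum, Finset.sum_ite, ← Finset.mul_sum, JPUndominated, JP_eq_sum_domWeight,
    ← Finset.sum_filter_add_sum_filter_not univ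
      (fun W => Fin.last k ∉ W ∧ Fin.last k ∉ extN (pathGraph (k + 1)) W)]
  ring

theorem JPMem_pathGraph_add_two :
    JPMem (pathGraph (k + 3)) (Fin.last (k + 2)) x y
      = x * (JP (pathGraph (k + 2)) x y
          + (y - 1) * JPNotMem (pathGraph (k + 1)) (Fin.last k) x y) := by
  rw [JPMem_pathGraph_succ, JPUndominated_pathGraph_succ]

end PathGraph

theorem J_path_recurrence (n : ℕ) (hn : 4 ≤ n) (x y : ℝ) :
    JP (SimpleGraph.pathGraph n) x y
      = (1 + x) * JP (SimpleGraph.pathGraph (n - 1)) x y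
        + x * (y - 1) * (JP (SimpleGraph.pathGraph (n - 2)) x y
            + y * JP (SimpleGraph.pathGraph (n - 3)) x y) := by
  obtain ⟨m, rfl⟩ := Nat.exists_eq_add_of_le' hn
  show JP (pathGraph (m + 4)) x y
    = (1 + x) * JP (pathGraph (m + 3)) x y
      + x * (y - 1) * (JP (pathGraph (m + 2)) x y + y * JP (pathGraph (m + 1)) x y)
  linear_combination -JPMem_add_JPNotMem (pathGraph (m + 4)) (Fin.last (m + 3)) x y
    + JPNotMem_pathGraph_succ (m + 2) x y + JPMem_pathGraph_add_two (m + 1) x y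
    + JPMem_add_JPNotMem (pathGraph (m + 3)) (Fin.last (m + 2)) x y
    + (y - 1) * JPMem_pathGraph_add_two m x y
    + x * (y - 1) * JPNotMem_pathGraph_succ m x y
    + x * (y - 1) * y * JPMem_add_JPNotMem (pathGraph (m + 1)) (Fin.last m) x y
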